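/- arXiv:1308.2115 — 5 statements merged into one kernel-verified Lean document; each statement's English description precedes it below -/
import Mathlib

section
/- For all n ≥ 0 and integers r ≥ 0, k, the addition formula A_n^{(r,k)}(x+y) = Σ_{j=0}^n (-1)^{n-j} · C(n,j) · A_j^{(r,k)}(x) · y^{(n-j)} holds, where y^{(m)} = y(y+1)⋯(y+m-1) is the rising factorial. -/
/-!
Evaluating the variable `x` turns the generating function `f(t) (1 + t) ^ (-x)` of `A_n(x)` into
`f(t)` times the binomial series `(1 + t) ^ (-x)`, whose `n`-th coefficient is
`(-1) ^ n x^{(n)} / n!`. Since `(1 + t) ^ (-(x + y)) = (1 + t) ^ (-x) (1 + t) ^ (-y)`, the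
generating function at `x + y` is the one at `x` times `(1 + t) ^ (-y)`; comparing the
coefficients of `t ^ n` gives the addition formula.
-/

open PowerSeries Polynomial Finset Nat

variable {K : Type*} [Field K] [CharZero K]

theorem Ring.choose_neg_eq_ascPochhammer (x : K) (n : ℕ) :
    Ring.choose (-x) n = (-1) ^ n / n ! * (ascPochhammer K n).eval x := by
  have h := ascPochhammer_smeval_neg_eq_descPochhammer (-x) n
  rw [neg_neg, ascPochhammer_smeval_eq_eval, Units.smul_def, zsmul_eq_mul,
    Int.cast_negOnePow_natCast] at h
  rw [Ring.choose_eq_smul, smul_eq_mul, h, ← mul_assoc, div_mul_eq_mul_div, ← mul_pow]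
  simp [div_eq_inv_mul]

namespace PowerSeries

variable (K) in
/-- `(1 + t) ^ (-x)` as a power series in `t` whose coefficients are polynomials in `x`. -/
noncomputable def onePlusXNegPow : K[X]⟦X⟧ :=
  mk fun n => ((-1 : K) ^ n / n !) • ascPochhammer K n

theorem map_evalRingHom_onePlusXNegPow (z : K) :
    map (evalRingHom z) (onePlusXNegPow K) = binomialSeries K (-z) := by
  ext n
  simp [onePlusXNegPow, Ring.choose_neg_eq_ascPochhammer]

theorem map_evalRingHom_map_C {R : Type*} [CommSemiring R] (z : R) (f : R⟦X⟧) :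
    map (evalRingHom z) (map Polynomial.C f) = f := by
  ext n
  simp

theorem eval_add_of_map_C_mul_onePlusXNegPow (f : K⟦X⟧) (A : ℕ → K[X])
    (hA : map Polynomial.C f * onePlusXNegPow K = mk fun n => (n ! : K)⁻¹ • A n)
    (n : ℕ) (x y : K) :
    (A n).eval (x + y) =
      ∑ j ∈ range (n + 1),
        (-1) ^ (n - j) * (n.choose j : K) * (A j).eval x * (ascPochhammer K (n - j)).eval y := by
  have hegf (z : K) : map (evalRingHom z) (mk fun n => (n ! : K)⁻¹ • A n) =
      f * binomialSeries K (-z) := by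
    rw [← hA, map_mul, map_evalRingHom_map_C, map_evalRingHom_onePlusXNegPow]
  have hadd := hegf (x + y)
  rw [neg_add, binomialSeries_add, ← mul_assoc, ← hegf x] at hadd
  have hcoeff := congrArg (coeff n) hadd
  simp only [coeff_mul, coeff_map, coeff_mk, binomialSeries_coeff, coe_evalRingHom, eval_smul,
    Ring.choose_neg_eq_ascPochhammer, smul_eq_mul, mul_one,
    Nat.sum_antidiagonal_eq_sum_range_succ_mk] at hcoeff
  have hn : (n ! : K) ≠ 0 := cast_ne_zero.mpr n.factorial_ne_zero
  rw [← mul_right_inj' (inv_ne_zero hn), hcoeff, mul_sum]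
  refine sum_congr rfl fun j hj => ?_
  rw [cast_choose K (mem_range_succ_iff.mp hj)]
  field_simp

end PowerSeries

theorem cauchy_stmt4_general
    (r : ℕ) (k : ℤ)
    (Lu : (PowerSeries ℚ)ˣ)
    (G : ℤ → PowerSeries ℚ)
    (A : ℤ → ℤ → ℕ → Polynomial ℚ)
    (hA : ∀ ρ κ : ℤ, PowerSeries.map (Polynomial.C : ℚ →+* Polynomial ℚ)
        (((Lu ^ (-ρ) : (PowerSeries ℚ)ˣ) : PowerSeries ℚ) * G κ) *
        PowerSeries.mk (fun n => ((-1 : ℚ) ^ n / n.factorial) • ascPochhammer ℚ n) =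
      PowerSeries.mk (fun n => ((n.factorial : ℚ)⁻¹) • A ρ κ n))
    :
    ∀ (n : ℕ) (x y : ℚ), (A (r : ℤ) k n).eval (x + y) =
      ∑ j ∈ Finset.range (n + 1),
        (-1 : ℚ) ^ (n - j) * (n.choose j : ℚ) * (A (r : ℤ) k j).eval x *
          (ascPochhammer ℚ (n - j)).eval y :=
  PowerSeries.eval_add_of_map_C_mul_onePlusXNegPow _ _ (hA r k)

/-- addition formula
`Aₙ^{(r,k)}(x+y) = Σ_{j=0}^n (-1)^{n-j} C(n,j) A_j^{(r,k)}(x) y^{(n-j)}`,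
for all `n ≥ 0` and integers `r ≥ 0`, `k` (stated via evaluation at all rationals,
which over ℚ is equivalent to the polynomial identity in two variables). -/
theorem cauchy_stmt4
    (r : ℕ) (k : ℤ)
    (L : PowerSeries ℚ)
    (hL : ∀ n : ℕ, PowerSeries.coeff n L = if n = 0 then 0 else (-1 : ℚ) ^ (n - 1) / n)
    (Lu : (PowerSeries ℚ)ˣ)
    (hLu : (Lu : PowerSeries ℚ) * PowerSeries.X = L)
    (G : ℤ → PowerSeries ℚ)
    (hG : ∀ (j : ℤ) (n : ℕ), PowerSeries.coeff n (G j) =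
      ∑ m ∈ Finset.range (n + 1),
        ((m.factorial : ℚ) * ((m : ℚ) + 1) ^ j)⁻¹ * PowerSeries.coeff n (L ^ m))
    (A : ℤ → ℤ → ℕ → Polynomial ℚ)
    (hA : ∀ ρ κ : ℤ, PowerSeries.map (Polynomial.C : ℚ →+* Polynomial ℚ)
        (((Lu ^ (-ρ) : (PowerSeries ℚ)ˣ) : PowerSeries ℚ) * G κ) *
        PowerSeries.mk (fun n => ((-1 : ℚ) ^ n / n.factorial) • ascPochhammer ℚ n) =
      PowerSeries.mk (fun n => ((n.factorial : ℚ)⁻¹) • A ρ κ n))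
    :
    ∀ (n : ℕ) (x y : ℚ), (A (r : ℤ) k n).eval (x + y) =
      ∑ j ∈ Finset.range (n + 1),
        (-1 : ℚ) ^ (n - j) * (n.choose j : ℚ) * (A (r : ℤ) k j).eval x *
          (ascPochhammer ℚ (n - j)).eval y :=
  cauchy_stmt4_general r k Lu G A hA
end

section
/- For all n ≥ 1 and integers r ≥ 0, k, one has n · A_{n-1}^{(r,k)}(x) = A_n^{(r,k)}(x-1) - A_n^{(r,k)}(x) as polynomials in x. -/
/-!
The factor `(1 + t)^{-x}` is the only place where `x` enters the generating function, and
`(1 + t)^{-(x-1)} = (1 + t) · (1 + t)^{-x}`. Substituting `x ↦ x - 1` therefore multiplies the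
whole generating function by `1 + t`; comparing the coefficients of `t^n / n!` gives the recurrence.
-/

open Polynomial

theorem ascPochhammer_succ_comp_X_sub_one {R : Type*} [CommRing R] (n : ℕ) :
    (ascPochhammer R (n + 1)).comp (X - 1) =
      ascPochhammer R (n + 1) - ((n + 1 : ℕ) : R) • ascPochhammer R n := by
  conv_lhs => rw [ascPochhammer_succ_left, mul_comp, X_comp, comp_assoc]
  rw [ascPochhammer_succ_right, add_comp, X_comp, one_comp, sub_add_cancel, comp_X,
    Nat.cast_smul_eq_nsmul, nsmul_eq_mul]
  push_cast
  ring

/-- `(1 + t)^{-x} = ∑ (-1)^n x^{(n)} t^n / n!`, where `x` is the polynomial variable and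
`x^{(n)}` the rising factorial. -/
noncomputable def negXBinomialSeries (K : Type*) [Field K] : PowerSeries K[X] :=
  PowerSeries.mk fun n => ((-1 : K) ^ n / n.factorial) • ascPochhammer K n

theorem map_compRingHom_negXBinomialSeries (K : Type*) [Field K] [CharZero K] :
    PowerSeries.map (compRingHom (X - 1)) (negXBinomialSeries K) =
      (1 + PowerSeries.X) * negXBinomialSeries K := by
  ext (_ | n) : 1
  · simp [negXBinomialSeries]
  have hcoeff : ((-1 : K) ^ n / n.factorial) =
      -((-1 : K) ^ (n + 1) / (n + 1).factorial) * ((n : K) + 1) := by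
    rw [Nat.factorial_succ]
    push_cast
    field_simp
    ring
  simp only [negXBinomialSeries, PowerSeries.coeff_map, add_mul, one_mul, map_add,
    PowerSeries.coeff_succ_X_mul, PowerSeries.coeff_mk, coe_compRingHom_apply, smul_comp,
    ascPochhammer_succ_comp_X_sub_one, hcoeff]
  push_cast
  module

theorem PowerSeries.succ_smul_eq_sub_of_mk_eq_one_add_X_mul {K A : Type*} [Field K] [CharZero K]
    [Ring A] [Algebra K A] {a b : ℕ → A}
    (h : mk (fun n => (n.factorial : K)⁻¹ • b n) =
      (1 + X) * mk (fun n => (n.factorial : K)⁻¹ • a n)) (n : ℕ) :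
    ((n + 1 : ℕ) : K) • a n = b (n + 1) - a (n + 1) := by
  have hn := congrArg (coeff (n + 1)) h
  simp only [add_mul, one_mul, map_add, coeff_succ_X_mul, coeff_mk] at hn
  have hfac : ((n + 1).factorial : K) ≠ 0 := Nat.cast_ne_zero.2 (Nat.factorial_ne_zero _)
  have hscale : ((n + 1).factorial : K) * (n.factorial : K)⁻¹ = ((n + 1 : ℕ) : K) := by
    rw [Nat.factorial_succ, Nat.cast_mul,
      mul_inv_cancel_right₀ (Nat.cast_ne_zero.2 (Nat.factorial_ne_zero _))]
  have hscaled := congrArg (((n + 1).factorial : K) • ·) hn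
  simp only [smul_add, smul_smul, mul_inv_cancel₀ hfac, one_smul, hscale] at hscaled
  rw [hscaled]
  abel

theorem succ_smul_eq_comp_X_sub_one_sub {K : Type*} [Field K] [CharZero K] (F : PowerSeries K)
    {a : ℕ → K[X]}
    (h : PowerSeries.map C F * negXBinomialSeries K =
      PowerSeries.mk fun n => (n.factorial : K)⁻¹ • a n) (n : ℕ) :
    ((n + 1 : ℕ) : K) • a n = (a (n + 1)).comp (X - 1) - a (n + 1) := by
  refine PowerSeries.succ_smul_eq_sub_of_mk_eq_one_add_X_mul (a := a)
    (b := fun n => (a n).comp (X - 1)) ?_ n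
  have hF : PowerSeries.map (compRingHom (X - 1)) (PowerSeries.map C F) =
      PowerSeries.map C F := by
    rw [← RingHom.comp_apply, ← PowerSeries.map_comp]
    congr 2
    exact RingHom.ext fun c => by simp
  have hmap : (PowerSeries.mk fun n => (n.factorial : K)⁻¹ • (a n).comp (X - 1)) =
      PowerSeries.map (compRingHom (X - 1))
        (PowerSeries.mk fun n => (n.factorial : K)⁻¹ • a n) := by
    ext; simp [smul_comp]
  rw [hmap, ← h, map_mul, hF, map_compRingHom_negXBinomialSeries, mul_left_comm]

theorem cauchy_stmt5_general
    (r : ℕ) (k : ℤ)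
    (Lu : (PowerSeries ℚ)ˣ)
    (G : ℤ → PowerSeries ℚ)
    (A : ℤ → ℤ → ℕ → Polynomial ℚ)
    (hA : ∀ ρ κ : ℤ, PowerSeries.map (Polynomial.C : ℚ →+* Polynomial ℚ)
        (((Lu ^ (-ρ) : (PowerSeries ℚ)ˣ) : PowerSeries ℚ) * G κ) *
        PowerSeries.mk (fun n => ((-1 : ℚ) ^ n / n.factorial) • ascPochhammer ℚ n) =
      PowerSeries.mk (fun n => ((n.factorial : ℚ)⁻¹) • A ρ κ n))
    :
    ∀ n : ℕ, 1 ≤ n →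
      (n : ℚ) • A (r : ℤ) k (n - 1) =
        (A (r : ℤ) k n).comp (Polynomial.X - 1) - A (r : ℤ) k n := by
  intro n hn
  obtain ⟨m, rfl⟩ := Nat.exists_eq_add_of_le' hn
  exact succ_smul_eq_comp_X_sub_one_sub _ (hA r k) m

/-- for all `n ≥ 1` and integers `r ≥ 0`, `k`,
`n · A_{n-1}^{(r,k)}(x) = Aₙ^{(r,k)}(x-1) - Aₙ^{(r,k)}(x)` as polynomials in `x`. -/
theorem cauchy_stmt5
    (r : ℕ) (k : ℤ)
    (L : PowerSeries ℚ)
    (hL : ∀ n : ℕ, PowerSeries.coeff n L = if n = 0 then 0 else (-1 : ℚ) ^ (n - 1) / n)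
    (Lu : (PowerSeries ℚ)ˣ)
    (hLu : (Lu : PowerSeries ℚ) * PowerSeries.X = L)
    (G : ℤ → PowerSeries ℚ)
    (hG : ∀ (j : ℤ) (n : ℕ), PowerSeries.coeff n (G j) =
      ∑ m ∈ Finset.range (n + 1),
        ((m.factorial : ℚ) * ((m : ℚ) + 1) ^ j)⁻¹ * PowerSeries.coeff n (L ^ m))
    (A : ℤ → ℤ → ℕ → Polynomial ℚ)
    (hA : ∀ ρ κ : ℤ, PowerSeries.map (Polynomial.C : ℚ →+* Polynomial ℚ)
        (((Lu ^ (-ρ) : (PowerSeries ℚ)ˣ) : PowerSeries ℚ) * G κ) *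
        PowerSeries.mk (fun n => ((-1 : ℚ) ^ n / n.factorial) • ascPochhammer ℚ n) =
      PowerSeries.mk (fun n => ((n.factorial : ℚ)⁻¹) • A ρ κ n))
    :
    ∀ n : ℕ, 1 ≤ n →
      (n : ℚ) • A (r : ℤ) k (n - 1) =
        (A (r : ℤ) k n).comp (Polynomial.X - 1) - A (r : ℤ) k n :=
  cauchy_stmt5_general r k Lu G A hA
end

section
/- For all n ≥ 0, r ≥ 0 and every integer k, A_n^{(r,k)}(x) = Σ_{j=0}^n [ Σ_{m=j}^n Σ_{l=0}^{m-j} (C(m,l)·C(m-l,j) / (C(m-l-j+r, r)·(l+1)^k)) · S₁(n,m) · S₂(m-l-j+r, r) ] · (-x)^j, where S₁ and S₂ are the Stirling numbers of the first and second kind respectively. -/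
/-!
Put `u = log (1 + t)`, so that `t = eᵘ - 1`. Every factor of the generating function is then a
power series in `u`: `(t / u) ^ r = ((eᵘ - 1) / u) ^ r`, `Lif_k(u)`, and `(1 + t) ^ (-x) = e^(-x u)`.
Multiply them as series in `u` and expand `uᵐ = m! ∑ₙ S₁(n, m) tⁿ / n!`, which follows from
`(1 + t) u' = 1`. That `((eᵘ - 1) / u) ^ r` evaluated at `u = log (1 + t)` is `(t / u) ^ r` comes
down to the orthogonality `∑ₘ S₂(m, r) S₁(n, m) = δₙᵣ`.
-/

open PowerSeries Finset
open scoped Nat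

theorem Nat.choose_mul_choose_div_choose_eq {m l j : ℕ} (r : ℕ) (h : l + j ≤ m) :
    (m.choose l * (m - l).choose j / (m - l - j + r).choose r : ℚ) =
      m ! * r ! / (l ! * j ! * (m - l - j + r)!) := by
  rw [Nat.cast_choose ℚ (by omega : l ≤ m), Nat.cast_choose ℚ (by omega : j ≤ m - l),
    Nat.cast_choose ℚ (Nat.le_add_left r _), Nat.add_sub_cancel]
  field_simp

theorem Nat.eq_stirlingSecond_of_recurrence (S : ℕ → ℕ → ℕ) (h00 : S 0 0 = 1)
    (hsucc0 : ∀ n, S (n + 1) 0 = 0) (h0succ : ∀ k, S 0 (k + 1) = 0)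
    (hrec : ∀ n k, S (n + 1) (k + 1) = (k + 1) * S n (k + 1) + S n k) :
    S = Nat.stirlingSecond := by
  funext n k
  induction n generalizing k with
  | zero => cases k <;> simp [h00, h0succ]
  | succ n ih => cases k <;> simp [hsucc0, hrec, Nat.stirlingSecond_succ_succ, ih]

namespace Polynomial

section Ring

variable {R : Type*} [Ring R]

theorem coeff_descPochhammer_succ_succ (n m : ℕ) :
    (descPochhammer R (n + 1)).coeff (m + 1) =
      (descPochhammer R n).coeff m - n * (descPochhammer R n).coeff (m + 1) := by
  rw [descPochhammer_succ_right, mul_sub, coeff_sub, coeff_mul_X, ← Nat.cast_comm,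
    coeff_natCast_mul]

theorem coeff_descPochhammer_succ_zero (n : ℕ) : (descPochhammer R (n + 1)).coeff 0 = 0 := by
  rw [descPochhammer_succ_left, coeff_X_mul_zero]

theorem coeff_descPochhammer_of_lt {n m : ℕ} (h : n < m) : (descPochhammer R n).coeff m = 0 := by
  induction n generalizing m with
  | zero => simp [coeff_one, h.ne']
  | succ n ih =>
    obtain ⟨m, rfl⟩ := Nat.exists_eq_add_one_of_ne_zero (by omega : m ≠ 0)
    rw [coeff_descPochhammer_succ_succ, ih (by omega), ih (by omega), mul_zero, sub_zero]

theorem coeff_descPochhammer_eq_of_eq_sum {S : ℕ → ℕ → R}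
    (hS : ∀ n, descPochhammer R n = ∑ l ∈ range (n + 1), C (S n l) * X ^ l)
    (hS_of_lt : ∀ n l, n < l → S n l = 0) (n m : ℕ) :
    (descPochhammer R n).coeff m = S n m := by
  rcases lt_or_ge n m with h | h
  · rw [hS_of_lt n m h, coeff_descPochhammer_of_lt h]
  · simp [hS n, finsetSum_coeff, Nat.lt_succ_of_le h]

end Ring

section CommRing

variable {R : Type*} [CommRing R]

theorem sum_stirlingSecond_mul_coeff_descPochhammer (n k : ℕ) :
    ∑ m ∈ range (n + 1), (Nat.stirlingSecond m k : R) * (descPochhammer R n).coeff m =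
      if n = k then 1 else 0 := by
  induction n generalizing k with
  | zero => cases k <;> simp
  | succ n ih =>
    have shifted : ∑ m ∈ range (n + 1),
        (Nat.stirlingSecond (m + 1) k : R) * (descPochhammer R n).coeff (m + 1) =
          (if n = k then 1 else 0) - Nat.stirlingSecond 0 k * (descPochhammer R n).coeff 0 := by
      rw [sum_range_succ, coeff_descPochhammer_of_lt n.lt_succ_self, mul_zero, add_zero, ← ih,
        sum_range_succ', add_sub_cancel_right]
    rw [sum_range_succ', coeff_descPochhammer_succ_zero, mul_zero, add_zero]
    simp only [coeff_descPochhammer_succ_succ, mul_sub, sum_sub_distrib, mul_left_comm _ (n : R),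
      ← mul_sum, shifted]
    cases k with
    | zero => cases n <;> simp [coeff_descPochhammer_succ_zero]
    | succ k =>
      have recurrence : ∑ m ∈ range (n + 1),
          (Nat.stirlingSecond (m + 1) (k + 1) : R) * (descPochhammer R n).coeff m =
            (k + 1) * (if n = k + 1 then 1 else 0) + (if n = k then 1 else 0) := by
        simp only [Nat.stirlingSecond_succ_succ, ← ih]
        push_cast
        simp only [add_mul, sum_add_distrib, mul_assoc, mul_sum]
      rw [recurrence]
      split_ifs <;> simp_all

theorem descPochhammer_comp_neg_X (n : ℕ) :
    (descPochhammer R n).comp (-X) = (-1) ^ n * ascPochhammer R n := by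
  induction n with
  | zero => simp
  | succ n ih =>
    rw [descPochhammer_succ_right, mul_comp, ih, sub_comp, X_comp, natCast_comp,
      ascPochhammer_succ_right, pow_succ]
    ring

theorem sum_C_coeff_descPochhammer_mul_neg_X_pow (n : ℕ) :
    ∑ j ∈ range (n + 1), C ((descPochhammer R n).coeff j) * (-X) ^ j =
      (-1) ^ n * ascPochhammer R n := by
  have hdeg : (descPochhammer R n).natDegree < n + 1 :=
    Nat.lt_succ_of_le (natDegree_le_iff_coeff_eq_zero.mpr fun _ => coeff_descPochhammer_of_lt)
  rw [← descPochhammer_comp_neg_X, comp, eval₂_eq_sum_range' C hdeg]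

end CommRing

end Polynomial

namespace PowerSeries

variable {R : Type*} [CommRing R]

theorem coeff_pow_eq_zero_of_lt {g : R⟦X⟧} (hg : constantCoeff g = 0) {m n : ℕ}
    (h : n < m) : coeff n (g ^ m) = 0 :=
  X_pow_dvd_iff.mp (pow_dvd_pow_of_dvd (X_dvd_iff.mpr hg) m) n h

theorem coeff_subst_eq_sum_range {g : R⟦X⟧} (hg : constantCoeff g = 0) (f : R⟦X⟧) (n : ℕ) :
    coeff n (f.subst g) = ∑ m ∈ range (n + 1), coeff m f * coeff n (g ^ m) := by
  rw [coeff_subst' (HasSubst.of_constantCoeff_zero' hg)]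
  refine finsum_eq_sum_of_support_subset _ fun m hm => ?_
  rw [coe_range, Set.mem_Iio, Nat.lt_succ_iff]
  by_contra! h
  exact hm (by simp only [smul_eq_mul]; rw [coeff_pow_eq_zero_of_lt hg h, mul_zero])

variable {A : Type*} [CommRing A] [Algebra ℚ A]

theorem one_add_X_mul_derivative_log : (1 + X) * d⁄dX A (log A) = 1 := by
  ext n
  rw [deriv_log, add_mul, one_mul, map_add, coeff_one]
  cases n with
  | zero => simp
  | succ n => simp [coeff_succ_X_mul, pow_succ]

theorem one_add_X_mul_derivative_log_pow_succ (m : ℕ) :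
    (1 + X) * d⁄dX A (log A ^ (m + 1)) = (m + 1) • log A ^ m := by
  rw [Derivation.leibniz_pow, add_tsub_cancel_right, smul_eq_mul, nsmul_eq_mul, nsmul_eq_mul,
    Nat.cast_succ]
  linear_combination (↑m + 1) * log A ^ m * (one_add_X_mul_derivative_log (A := A))

theorem factorial_mul_coeff_log_pow (n m : ℕ) :
    (n ! : A) * coeff n (log A ^ m) = m ! * (descPochhammer A n).coeff m := by
  induction n generalizing m with
  | zero =>
    cases m <;> simp [coeff_zero_eq_constantCoeff_apply, Polynomial.coeff_one]
  | succ n ih =>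
    cases m with
    | zero =>
      rw [pow_zero, coeff_one, if_neg n.succ_ne_zero, Polynomial.coeff_descPochhammer_succ_zero,
        mul_zero, mul_zero]
    | succ m =>
      have hode := congrArg (coeff n) (one_add_X_mul_derivative_log_pow_succ (A := A) m)
      have hX : coeff n (X * d⁄dX A (log A ^ (m + 1))) = n * coeff n (log A ^ (m + 1)) := by
        cases n with
        | zero => simp
        | succ n => rw [coeff_succ_X_mul, coeff_derivative]; push_cast; ring
      rw [add_mul, one_mul, map_add, hX, coeff_derivative, map_nsmul, nsmul_eq_mul] at hode
      have ih' := ih (m + 1)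
      rw [Nat.factorial_succ m] at ih'
      rw [Polynomial.coeff_descPochhammer_succ_succ, Nat.factorial_succ n, Nat.factorial_succ m]
      push_cast at hode ih' ⊢
      linear_combination (n ! : A) * hode + (m + 1 : A) * ih m - n * ih'

theorem coeff_log_pow (n m : ℕ) :
    coeff n (log ℚ ^ m) = m ! / n ! * (descPochhammer ℚ n).coeff m := by
  rw [div_mul_eq_mul_div, eq_div_iff (by positivity), mul_comm, factorial_mul_coeff_log_pow]

theorem subst_log_stirlingSecond_egf (r : ℕ) :
    (mk fun m => (Nat.stirlingSecond m r / m ! : ℚ)).subst (log ℚ) = (r ! : ℚ)⁻¹ • X ^ r := by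
  ext n
  rw [coeff_subst_eq_sum_range constantCoeff_log, coeff_smul, coeff_X_pow]
  simp only [coeff_mk, coeff_log_pow]
  have h : ∀ m, (Nat.stirlingSecond m r / m ! : ℚ) * (m ! / n ! * (descPochhammer ℚ n).coeff m) =
      (n ! : ℚ)⁻¹ * (Nat.stirlingSecond m r * (descPochhammer ℚ n).coeff m) := fun m => by
    field_simp
  simp only [h, ← mul_sum, Polynomial.sum_stirlingSecond_mul_coeff_descPochhammer]
  split_ifs with hnr <;> simp [hnr]

-- `((eᵘ - 1) / u) ^ r`, since `(eᵘ - 1) ^ r = r! ∑ₙ S₂(n, r) uⁿ / n!`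
noncomputable def stirlingSecondQuot (r : ℕ) : ℚ⟦X⟧ :=
  mk fun m => r ! * Nat.stirlingSecond (m + r) r / (m + r)!

noncomputable def lif (k : ℤ) : ℚ⟦X⟧ :=
  mk fun m => ((m ! : ℚ) * (m + 1) ^ k)⁻¹

theorem val_zpow_neg_eq_subst_log {u : ℚ⟦X⟧ˣ} (hu : (u : ℚ⟦X⟧) * X = log ℚ) (r : ℕ) :
    ((u ^ (-(r : ℤ)) : ℚ⟦X⟧ˣ) : ℚ⟦X⟧) = (stirlingSecondQuot r).subst (log ℚ) := by
  have hshift : X ^ r * stirlingSecondQuot r =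
      (r ! : ℚ) • mk fun m => (Nat.stirlingSecond m r / m ! : ℚ) := by
    ext m
    rw [coeff_X_pow_mul', coeff_smul, stirlingSecondQuot, coeff_mk, coeff_mk]
    split_ifs with h
    · rw [Nat.sub_add_cancel h, smul_eq_mul, mul_div_assoc]
    · rw [Nat.stirlingSecond_eq_zero_of_lt (by omega)]
      simp
  have hlog : log ℚ ^ r * (stirlingSecondQuot r).subst (log ℚ) = X ^ r := by
    have hsubst : HasSubst (log ℚ) := HasSubst.log
    have hpow : (X ^ r : ℚ⟦X⟧).subst (log ℚ) = log ℚ ^ r := by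
      rw [subst_pow hsubst, subst_X hsubst]
    rw [← hpow, ← subst_mul hsubst, hshift, subst_smul hsubst,
      subst_log_stirlingSecond_egf, smul_smul, mul_inv_cancel₀ (by positivity), one_smul]
  have hinv : (stirlingSecondQuot r).subst (log ℚ) * ((u ^ r : ℚ⟦X⟧ˣ) : ℚ⟦X⟧) = 1 := by
    refine mul_right_cancel₀ (pow_ne_zero r X_ne_zero) ?_
    calc (stirlingSecondQuot r).subst (log ℚ) * ((u ^ r : ℚ⟦X⟧ˣ) : ℚ⟦X⟧) * X ^ r
        = log ℚ ^ r * (stirlingSecondQuot r).subst (log ℚ) := by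
          rw [← hu, Units.val_pow_eq_pow_val, mul_pow]; ring
      _ = 1 * X ^ r := by rw [hlog, one_mul]
  rw [zpow_neg, zpow_natCast]
  exact (Units.eq_inv_of_mul_eq_one_right hinv).symm

theorem map_subst_log {B : Type*} [CommRing B] [Algebra ℚ B] (h : A →+* B) (f : A⟦X⟧) :
    PowerSeries.map h (f.subst (log A)) = (f.map h).subst (log B) := by
  rw [← map_log h]
  exact map_subst HasSubst.log f

theorem coeff_log_polynomial_pow (n m : ℕ) :
    coeff n (log (Polynomial ℚ) ^ m) =
      Polynomial.C (m ! / n ! * (descPochhammer ℚ n).coeff m) := by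
  rw [← map_log Polynomial.C, ← map_pow, coeff_map, coeff_log_pow]

-- `(1 + t) ^ (-x) = exp (-x log (1 + t))`, with `x` the polynomial variable
theorem mk_ascPochhammer_eq_subst_log :
    (mk fun n => ((-1 : ℚ) ^ n / n !) • ascPochhammer ℚ n) =
      (rescale (-Polynomial.X) (exp (Polynomial ℚ))).subst (log (Polynomial ℚ)) := by
  refine PowerSeries.ext fun n => ?_
  rw [coeff_mk, coeff_subst_eq_sum_range constantCoeff_log]
  trans Polynomial.C (n ! : ℚ)⁻¹ *
    ∑ j ∈ range (n + 1), Polynomial.C ((descPochhammer ℚ n).coeff j) * (-Polynomial.X) ^ j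
  · rw [Polynomial.sum_C_coeff_descPochhammer_mul_neg_X_pow, Polynomial.smul_eq_C_mul]
    simp only [div_eq_mul_inv, map_mul, map_pow, map_neg, map_one]
    ring
  rw [mul_sum]
  refine sum_congr rfl fun j _ => ?_
  have hscalar : (1 / j ! : ℚ) * (j ! / n ! * (descPochhammer ℚ n).coeff j) =
      (n ! : ℚ)⁻¹ * (descPochhammer ℚ n).coeff j := by
    field_simp
  rw [coeff_rescale, coeff_exp, coeff_log_polynomial_pow, Polynomial.algebraMap_eq, mul_assoc,
    ← map_mul, hscalar, map_mul]
  ring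

theorem coeff_map_C_mul_rescale_exp (f : ℚ⟦X⟧) (m : ℕ) :
    coeff m (map Polynomial.C f * rescale (-Polynomial.X) (exp (Polynomial ℚ))) =
      ∑ j ∈ range (m + 1), Polynomial.C (coeff (m - j) f / j !) * (-Polynomial.X) ^ j := by
  rw [mul_comm, coeff_mul, Nat.sum_antidiagonal_eq_sum_range_succ
    (fun j i => coeff j (rescale _ (exp _)) * coeff i (map Polynomial.C f))]
  refine sum_congr rfl fun j _ => ?_
  rw [coeff_rescale, coeff_exp, coeff_map, Polynomial.algebraMap_eq, div_eq_mul_inv,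
    div_eq_mul_inv, map_mul, map_mul, map_one]
  ring

theorem factorial_div_mul_coeff_stirlingSecondQuot_mul_lif {m j : ℕ} (r : ℕ) (k : ℤ)
    (h : j ≤ m) :
    (m ! / j ! : ℚ) * coeff (m - j) (stirlingSecondQuot r * lif k) =
      ∑ l ∈ range (m - j + 1), (m.choose l * (m - l).choose j /
        ((m - l - j + r).choose r * ((l : ℚ) + 1) ^ k)) * Nat.stirlingSecond (m - l - j + r) r := by
  rw [mul_comm (stirlingSecondQuot r), coeff_mul, Nat.sum_antidiagonal_eq_sum_range_succ
    (fun l p => coeff l (lif k) * coeff p (stirlingSecondQuot r)), mul_sum]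
  refine sum_congr rfl fun l hl => ?_
  have hlj : l + j ≤ m := by rw [mem_range] at hl; omega
  rw [lif, stirlingSecondQuot, coeff_mk, coeff_mk, Nat.sub_right_comm m j l, div_mul_eq_div_div,
    Nat.choose_mul_choose_div_choose_eq r hlj]
  field_simp

theorem factorial_smul_coeff_subst_log (r : ℕ) (k : ℤ) (n : ℕ) :
    (n ! : ℚ) • coeff n ((map Polynomial.C (stirlingSecondQuot r * lif k) *
      rescale (-Polynomial.X) (exp (Polynomial ℚ))).subst (log (Polynomial ℚ))) =
      ∑ j ∈ range (n + 1), Polynomial.C (∑ m ∈ Icc j n, ∑ l ∈ range (m - j + 1),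
        m.choose l * (m - l).choose j / ((m - l - j + r).choose r * ((l : ℚ) + 1) ^ k) *
          (descPochhammer ℚ n).coeff m * Nat.stirlingSecond (m - l - j + r) r) *
        (-Polynomial.X) ^ j := by
  simp only [coeff_subst_eq_sum_range constantCoeff_log, coeff_map_C_mul_rescale_exp,
    coeff_log_polynomial_pow, smul_sum, sum_mul, map_sum]
  rw [sum_comm' (t' := range (n + 1)) (s' := fun j => Icc j n)
    (fun m j => by simp only [mem_range, mem_Icc]; omega)]
  refine sum_congr rfl fun j _ => sum_congr rfl fun m hm => ?_
  set c := coeff (m - j) (stirlingSecondQuot r * lif k)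
  set s := (descPochhammer ℚ n).coeff m
  have hscalar : (n ! : ℚ) * (c / j !) * (m ! / n ! * s) = ∑ l ∈ range (m - j + 1),
      m.choose l * (m - l).choose j / ((m - l - j + r).choose r * ((l : ℚ) + 1) ^ k) * s *
        Nat.stirlingSecond (m - l - j + r) r := by
    rw [show (n ! : ℚ) * (c / j !) * (m ! / n ! * s) = (m ! / j ! * c) * s by field_simp,
      factorial_div_mul_coeff_stirlingSecondQuot_mul_lif r k (mem_Icc.mp hm).1, sum_mul]
    exact sum_congr rfl fun l _ => mul_right_comm _ _ _
  rw [← sum_mul, ← map_sum, ← hscalar, Polynomial.smul_eq_C_mul]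
  simp only [map_mul]
  ring

end PowerSeries

/-- explicit formula for `Aₙ^{(r,k)}(x)` in terms of Stirling numbers of
both kinds:
`Aₙ^{(r,k)}(x) = Σ_{j=0}^n [ Σ_{m=j}^n Σ_{l=0}^{m-j}
 (C(m,l)C(m-l,j)/(C(m-l-j+r,r)(l+1)^k)) S₁(n,m) S₂(m-l-j+r,r) ] (-x)^j`. -/
theorem cauchy_stmt6
    (r : ℕ) (k : ℤ)
    (L : PowerSeries ℚ)
    (hL : ∀ n : ℕ, PowerSeries.coeff n L = if n = 0 then 0 else (-1 : ℚ) ^ (n - 1) / n)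
    (Lu : (PowerSeries ℚ)ˣ)
    (hLu : (Lu : PowerSeries ℚ) * PowerSeries.X = L)
    (G : ℤ → PowerSeries ℚ)
    (hG : ∀ (j : ℤ) (n : ℕ), PowerSeries.coeff n (G j) =
      ∑ m ∈ Finset.range (n + 1),
        ((m.factorial : ℚ) * ((m : ℚ) + 1) ^ j)⁻¹ * PowerSeries.coeff n (L ^ m))
    (A : ℤ → ℤ → ℕ → Polynomial ℚ)
    (hA : ∀ ρ κ : ℤ, PowerSeries.map (Polynomial.C : ℚ →+* Polynomial ℚ)
        (((Lu ^ (-ρ) : (PowerSeries ℚ)ˣ) : PowerSeries ℚ) * G κ) *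
        PowerSeries.mk (fun n => ((-1 : ℚ) ^ n / n.factorial) • ascPochhammer ℚ n) =
      PowerSeries.mk (fun n => ((n.factorial : ℚ)⁻¹) • A ρ κ n))
    (S1 : ℕ → ℕ → ℚ)
    (hS1 : ∀ n : ℕ, descPochhammer ℚ n =
      ∑ l ∈ Finset.range (n + 1), Polynomial.C (S1 n l) * Polynomial.X ^ l)
    (hS1zero : ∀ n l : ℕ, n < l → S1 n l = 0)
    (S2 : ℕ → ℕ → ℕ)
    (hS200 : S2 0 0 = 1)
    (hS2n0 : ∀ n : ℕ, S2 (n + 1) 0 = 0)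
    (hS20m : ∀ m : ℕ, S2 0 (m + 1) = 0)
    (hS2rec : ∀ n m : ℕ, S2 (n + 1) (m + 1) = (m + 1) * S2 n (m + 1) + S2 n m)
    :
    ∀ n : ℕ, A (r : ℤ) k n = ∑ j ∈ Finset.range (n + 1),
      Polynomial.C (∑ m ∈ Finset.Icc j n, ∑ l ∈ Finset.range (m - j + 1),
        ((m.choose l : ℚ) * ((m - l).choose j : ℚ) /
          (((m - l - j + r).choose r : ℚ) * ((l : ℚ) + 1) ^ k)) *
          S1 n m * (S2 (m - l - j + r) r : ℚ)) * (-Polynomial.X) ^ j := by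
  obtain rfl : L = log ℚ := PowerSeries.ext fun n => by
    rcases n with _ | n
    · simp [hL]
    · simp [hL, pow_succ]
  obtain rfl := Nat.eq_stirlingSecond_of_recurrence S2 hS200 hS2n0 hS20m hS2rec
  intro n
  have hGk : G k = (lif k).subst (log ℚ) := PowerSeries.ext fun n => by
    rw [hG, coeff_subst_eq_sum_range constantCoeff_log, lif]
    simp only [coeff_mk]
  have hAn := congrArg (coeff n) (hA r k)
  rw [val_zpow_neg_eq_subst_log hLu, hGk, ← subst_mul HasSubst.log, map_subst_log,
    mk_ascPochhammer_eq_subst_log, ← subst_mul HasSubst.log, coeff_mk,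
    eq_inv_smul_iff₀ (by positivity)] at hAn
  rw [← hAn, factorial_smul_coeff_subst_log]
  simp only [Polynomial.coeff_descPochhammer_eq_of_eq_sum hS1 hS1zero]
end

section
/- For all n ≥ 1 and integers r ≥ 0, k, the derivative of A_n^{(r,k)}(x) satisfies d/dx A_n^{(r,k)}(x) = (-1)^{n+1} · n! · Σ_{l=0}^{n-1} ((-1)^{l+1} / ((n-l)·l!)) · A_l^{(r,k)}(x). -/
/-!
The exponential generating series of the `A ρ κ n` factors as `F(t) · (1 + t) ^ (-x)` with `F`
free of `x`, so `d/dx` only hits `(1 + t) ^ (-x)`, which it multiplies by `-log (1 + t)`.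
Hence `d/dx E = -log (1 + t) · E` for that series `E`, and comparing the coefficients of `tⁿ`
gives the formula. On coefficients, `(1 + t) ^ (-x)` is expanded through the rising factorials
`x (x + 1) ⋯ (x + n - 1)`, whose derivatives are again combinations of rising factorials.
-/

open Polynomial Finset
open scoped Nat

section RisingFactorial

variable {S : Type*} [CommSemiring S]

theorem ascPochhammer_mul_X_add_natCast {l n : ℕ} (h : l ≤ n) :
    ascPochhammer S l * (X + (n : S[X])) =
      ascPochhammer S (l + 1) + (n - l) • ascPochhammer S l := by
  obtain ⟨m, rfl⟩ := Nat.exists_eq_add_of_le h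
  rw [ascPochhammer_succ_right, Nat.add_sub_cancel_left, Nat.cast_add, ← add_assoc, mul_add,
    nsmul_eq_mul, mul_comm (m : S[X])]

theorem derivative_ascPochhammer (n : ℕ) :
    derivative (ascPochhammer S n) =
      ∑ l ∈ range n, (n.choose l * (n - l - 1)!) • ascPochhammer S l := by
  induction n with
  | zero => simp
  | succ n ih =>
    have hmul : derivative (ascPochhammer S n) * (X + (n : S[X])) =
        ∑ l ∈ range n, (n.choose l * (n - l - 1)!) • ascPochhammer S (l + 1) +
          ∑ l ∈ range n, (n.choose l * (n - l)!) • ascPochhammer S l := by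
      rw [ih, sum_mul, ← sum_add_distrib]
      refine sum_congr rfl fun l hl => ?_
      have hl : l < n := mem_range.mp hl
      rw [smul_mul_assoc, ascPochhammer_mul_X_add_natCast hl.le, smul_add, smul_smul,
        mul_assoc, mul_comm _ (n - l), Nat.mul_factorial_pred (Nat.sub_pos_of_lt hl).ne']
    have hshift :
        ∑ l ∈ range n, (n.choose l * (n - l)!) • ascPochhammer S l + ascPochhammer S n =
          ∑ l ∈ range n, (n.choose (l + 1) * (n - l - 1)!) • ascPochhammer S (l + 1) +
            n ! • ascPochhammer S 0 := by
      calc _ = ∑ l ∈ range (n + 1), (n.choose l * (n - l)!) • ascPochhammer S l := by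
            simp [sum_range_succ]
        _ = _ := by simp [sum_range_succ', Nat.sub_add_eq]
    have hX : derivative (X + (n : S[X])) = 1 := by simp
    rw [ascPochhammer_succ_right, derivative_mul, hX, mul_one, hmul, add_assoc, hshift,
      ← add_assoc, ← sum_add_distrib, sum_range_succ' _ n]
    congr 1
    · refine sum_congr rfl fun l _ => ?_
      rw [Nat.choose_succ_succ, add_mul, add_smul, Nat.add_sub_add_right]
    · simp

end RisingFactorial

theorem cast_choose_mul_factorial_eq_div {l n : ℕ} (h : l < n) :
    ((n.choose l * (n - l - 1)! : ℕ) : ℚ) = n ! / ((n - l : ℕ) * l !) := by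
  have hnat : n.choose l * (n - l - 1)! * ((n - l) * l !) = n ! := by
    rw [← Nat.choose_mul_factorial_mul_factorial h.le,
      ← Nat.mul_factorial_pred (Nat.sub_pos_of_lt h).ne']
    ring
  have hpos : ((n - l : ℕ) : ℚ) * l ! ≠ 0 := by
    have := Nat.sub_pos_of_lt h
    positivity
  rw [eq_div_iff hpos]
  exact_mod_cast hnat

section CoeffwiseDerivative

variable {R : Type*} [CommSemiring R]

noncomputable def derivativeCoeffwise (f : PowerSeries R[X]) : PowerSeries R[X] :=
  PowerSeries.mk fun n => derivative (PowerSeries.coeff n f)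

@[simp]
theorem coeff_derivativeCoeffwise (f : PowerSeries R[X]) (n : ℕ) :
    PowerSeries.coeff n (derivativeCoeffwise f) = derivative (PowerSeries.coeff n f) :=
  PowerSeries.coeff_mk _ _

theorem derivativeCoeffwise_map_C_mul (g : PowerSeries R) (f : PowerSeries R[X]) :
    derivativeCoeffwise (PowerSeries.map C g * f) =
      PowerSeries.map C g * derivativeCoeffwise f := by
  ext n
  simp only [coeff_derivativeCoeffwise, PowerSeries.coeff_mul, PowerSeries.coeff_map, map_sum,
    derivative_C_mul]

end CoeffwiseDerivative

section LogOneAdd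

variable {A : Type*} [CommRing A] [Algebra ℚ A]

theorem PowerSeries.coeff_log_mul (f : PowerSeries A) (n : ℕ) :
    PowerSeries.coeff n (PowerSeries.log A * f) =
      ∑ l ∈ range n, ((-1 : ℚ) ^ (n - l + 1) / (n - l : ℕ)) • PowerSeries.coeff l f := by
  rw [mul_comm, PowerSeries.coeff_mul, Nat.sum_antidiagonal_eq_sum_range_succ
    (fun i j => PowerSeries.coeff i f * PowerSeries.coeff j (PowerSeries.log A)), sum_range_succ]
  simp only [PowerSeries.coeff_log, Nat.sub_self, if_pos, mul_zero, add_zero]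
  refine sum_congr rfl fun l hl => ?_
  rw [if_neg (Nat.sub_pos_of_lt (mem_range.mp hl)).ne', Algebra.smul_def, mul_comm]

/-- The expansion `(1 + t) ^ (-x) = ∑ (-1)ⁿ x (x + 1) ⋯ (x + n - 1) tⁿ / n!`. -/
noncomputable def onePlusPowNegX (A : Type*) [CommRing A] [Algebra ℚ A] : PowerSeries A[X] :=
  PowerSeries.mk fun n => ((-1 : ℚ) ^ n / n !) • ascPochhammer A n

theorem derivativeCoeffwise_onePlusPowNegX :
    derivativeCoeffwise (onePlusPowNegX A) = -PowerSeries.log A[X] * onePlusPowNegX A := by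
  ext n : 1
  rw [neg_mul, map_neg, PowerSeries.coeff_log_mul, coeff_derivativeCoeffwise, onePlusPowNegX,
    PowerSeries.coeff_mk, derivative_smul, derivative_ascPochhammer, smul_sum, ← sum_neg_distrib]
  refine sum_congr rfl fun l hl => ?_
  have hl : l < n := mem_range.mp hl
  rw [PowerSeries.coeff_mk, ← Nat.cast_smul_eq_nsmul ℚ, cast_choose_mul_factorial_eq_div hl,
    smul_smul, smul_smul, ← neg_smul]
  congr 1
  obtain ⟨m, rfl⟩ := Nat.exists_eq_add_of_lt hl
  have hsub : l + m + 1 - l = m + 1 := by omega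
  simp only [hsub, pow_succ, pow_add]
  field_simp

theorem derivative_eq_sum_of_derivativeCoeffwise_eq_neg_log_mul {a : ℕ → A[X]}
    (ha : derivativeCoeffwise (PowerSeries.mk fun n => ((n ! : ℚ)⁻¹) • a n) =
      -PowerSeries.log A[X] * PowerSeries.mk fun n => ((n ! : ℚ)⁻¹) • a n) (n : ℕ) :
    derivative (a n) = ((-1 : ℚ) ^ (n + 1) * n !) •
      ∑ l ∈ range n, ((-1 : ℚ) ^ (l + 1) / ((n - l : ℕ) * l !)) • a l := by
  have hcoeff := congrArg (PowerSeries.coeff n) ha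
  rw [coeff_derivativeCoeffwise, PowerSeries.coeff_mk, derivative_smul, neg_mul, map_neg,
    PowerSeries.coeff_log_mul] at hcoeff
  calc derivative (a n) = (n ! : ℚ) • ((n ! : ℚ)⁻¹ • derivative (a n)) := by
        rw [smul_smul, mul_inv_cancel₀ (by positivity), one_smul]
    _ = _ := by
        rw [hcoeff, ← sum_neg_distrib, smul_sum, smul_sum]
        refine sum_congr rfl fun l hl => ?_
        obtain ⟨m, rfl⟩ := Nat.exists_eq_add_of_lt (mem_range.mp hl)
        have hsub : l + m + 1 - l = m + 1 := by omega
        rw [PowerSeries.coeff_mk, ← neg_smul, smul_smul, smul_smul, smul_smul, hsub]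
        congr 1
        field_simp
        rw [← pow_add, ← neg_one_mul, ← pow_succ',
          show l + m + 1 + 1 + (l + 1) = m + 1 + 1 + 1 + 2 * l by ring,
          pow_add (-1 : ℚ) _ (2 * l), pow_mul, neg_one_sq, one_pow, mul_one]

end LogOneAdd

theorem cauchy_stmt9_general
    (r : ℕ) (k : ℤ)
    (Lu : (PowerSeries ℚ)ˣ)
    (G : ℤ → PowerSeries ℚ)
    (A : ℤ → ℤ → ℕ → Polynomial ℚ)
    (hA : ∀ ρ κ : ℤ, PowerSeries.map (Polynomial.C : ℚ →+* Polynomial ℚ)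
        (((Lu ^ (-ρ) : (PowerSeries ℚ)ˣ) : PowerSeries ℚ) * G κ) *
        PowerSeries.mk (fun n => ((-1 : ℚ) ^ n / n.factorial) • ascPochhammer ℚ n) =
      PowerSeries.mk (fun n => ((n.factorial : ℚ)⁻¹) • A ρ κ n))
    :
    ∀ n : ℕ, 1 ≤ n →
      Polynomial.derivative (A (r : ℤ) k n) =
        ((-1 : ℚ) ^ (n + 1) * n.factorial) • ∑ l ∈ Finset.range n,
          ((-1 : ℚ) ^ (l + 1) / (((n - l : ℕ) : ℚ) * l.factorial)) • A (r : ℤ) k l := by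
  intro n _
  refine derivative_eq_sum_of_derivativeCoeffwise_eq_neg_log_mul ?_ n
  have hE : PowerSeries.map C (((Lu ^ (-(r : ℤ)) : (PowerSeries ℚ)ˣ) : PowerSeries ℚ) * G k) *
      onePlusPowNegX ℚ = PowerSeries.mk fun n => ((n ! : ℚ)⁻¹) • A r k n := hA r k
  rw [← hE, derivativeCoeffwise_map_C_mul, derivativeCoeffwise_onePlusPowNegX, mul_left_comm,
    neg_mul]

/-- for all `n ≥ 1` and integers `r ≥ 0`, `k`,
`d/dx Aₙ^{(r,k)}(x) = (-1)^{n+1} n! Σ_{l=0}^{n-1} ((-1)^{l+1}/((n-l)l!)) A_l^{(r,k)}(x)`. -/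
theorem cauchy_stmt9
    (r : ℕ) (k : ℤ)
    (L : PowerSeries ℚ)
    (hL : ∀ n : ℕ, PowerSeries.coeff n L = if n = 0 then 0 else (-1 : ℚ) ^ (n - 1) / n)
    (Lu : (PowerSeries ℚ)ˣ)
    (hLu : (Lu : PowerSeries ℚ) * PowerSeries.X = L)
    (G : ℤ → PowerSeries ℚ)
    (hG : ∀ (j : ℤ) (n : ℕ), PowerSeries.coeff n (G j) =
      ∑ m ∈ Finset.range (n + 1),
        ((m.factorial : ℚ) * ((m : ℚ) + 1) ^ j)⁻¹ * PowerSeries.coeff n (L ^ m))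
    (A : ℤ → ℤ → ℕ → Polynomial ℚ)
    (hA : ∀ ρ κ : ℤ, PowerSeries.map (Polynomial.C : ℚ →+* Polynomial ℚ)
        (((Lu ^ (-ρ) : (PowerSeries ℚ)ˣ) : PowerSeries ℚ) * G κ) *
        PowerSeries.mk (fun n => ((-1 : ℚ) ^ n / n.factorial) • ascPochhammer ℚ n) =
      PowerSeries.mk (fun n => ((n.factorial : ℚ)⁻¹) • A ρ κ n))
    :
    ∀ n : ℕ, 1 ≤ n →
      Polynomial.derivative (A (r : ℤ) k n) =
        ((-1 : ℚ) ^ (n + 1) * n.factorial) • ∑ l ∈ Finset.range n,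
          ((-1 : ℚ) ^ (l + 1) / (((n - l : ℕ) : ℚ) * l.factorial)) • A (r : ℤ) k l :=
  cauchy_stmt9_general r k Lu G A hA
end

section
/- For integers n-1 ≥ m ≥ 1 and r ≥ 0, k ∈ ℤ: Σ_{l=0}^{n-m} C(n,l)·S₁(n-l,m)·A_l^{(r,k)} = r·Σ_{l=0}^{n-1-m} Σ_{a=0}^{l} (-1)^{l-a+1}·((l-a)!/(l-a+2))·C(n-1,l)·C(l,a)·S₁(n-1-l,m)·A_a^{(r+1,k)}(1) + r·Σ_{l=0}^{n-1-m} C(n-1,l)·S₁(n-l-1,m)·A_l^{(r,k)}(1) + (1/m)·Σ_{l=0}^{n-m} C(n-1,l)·S₁(n-l-1,m-1)·A_l^{(r,k-1)}(1) + (1 - 1/m)·Σ_{l=0}^{n-m} C(n-1,l)·S₁(n-l-1,m-1)·A_l^{(r,k)}(1). -/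
/-!
Write `u = log (1 + t)` and `w = t / u`. The derivation `θ = (1 + t) d/dt` is `d/du`, so
`θ u = 1`, `u · θ Lif_κ(u) = Lif_{κ-1}(u) - Lif_κ(u)` and `θ w = w + w² (u - t) / t²`.
The exponential generating function of `A_l^{(r,k)}(0)` is `w^r Lif_k(u)`, that of
`A_l^{(r,k)}(1)` is `w^r Lif_k(u) / (1 + t)`, and `u^m / m! = ∑ S₁(n, m) t^n / n!`, so each sum
`∑_l C(n, l) S₁(n - l, m) a_l` is `n! / m!` times the coefficient of `t^n` in the product of
`u^m` with the generating function of `a`. Expanding `θ (w^r Lif_k(u) u^{m+1})` by the Leibniz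
rule, dividing by `1 + t` and comparing the coefficients of `t^{n-1}` gives the identity.
-/

open PowerSeries Finset
open scoped Nat

namespace MixedTypePoly

section Egf

variable {K : Type*} [Field K]

noncomputable def egf (a : ℕ → K) : K⟦X⟧ := mk fun n => a n / n !

theorem coeff_egf (a : ℕ → K) (n : ℕ) : coeff n (egf a) = a n / n ! := coeff_mk _ _

variable [CharZero K]

theorem egf_factorial_mul_coeff (F : K⟦X⟧) : egf (fun n => n ! * coeff n F) = F := by
  ext n
  rw [coeff_egf, mul_div_cancel_left₀ _ (Nat.cast_ne_zero.mpr n.factorial_ne_zero)]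

theorem factorial_mul_coeff_egf_mul_egf (a b : ℕ → K) (n : ℕ) :
    n ! * coeff n (egf a * egf b) = ∑ l ∈ range (n + 1), n.choose l * a l * b (n - l) := by
  rw [coeff_mul, Nat.sum_antidiagonal_eq_sum_range_succ_mk, mul_sum]
  refine sum_congr rfl fun l hl => ?_
  rw [coeff_egf, coeff_egf, Nat.cast_choose K (Nat.lt_succ_iff.mp (mem_range.mp hl))]
  field_simp

end Egf

section Subst

variable {R : Type*} [CommRing R]

theorem coeff_pow_eq_zero_of_lt {g : R⟦X⟧} (hg : constantCoeff g = 0) {n m : ℕ} (h : n < m) :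
    coeff n (g ^ m) = 0 :=
  X_pow_dvd_iff.mp (pow_dvd_pow_of_dvd (X_dvd_iff.mpr hg) m) n h

theorem coeff_subst_eq_sum_range (f : R⟦X⟧) {g : R⟦X⟧} (hg : constantCoeff g = 0) (n : ℕ) :
    coeff n (f.subst g) = ∑ m ∈ range (n + 1), coeff m f * coeff n (g ^ m) := by
  rw [coeff_subst' (HasSubst.of_constantCoeff_zero' hg)]
  refine finsum_eq_sum_of_support_subset _ fun m hm => mem_range.mpr ?_
  by_contra h
  exact hm (show coeff m f • coeff n (g ^ m) = 0 by
    rw [coeff_pow_eq_zero_of_lt hg (by omega), smul_zero])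

end Subst

theorem coeff_log_eq (n : ℕ) :
    coeff n (log ℚ) = if n = 0 then 0 else (-1 : ℚ) ^ (n - 1) / n := by
  rw [coeff_log]
  rcases n with _ | n <;> simp [pow_succ]

theorem one_add_X_mul_mk_neg_one_pow : (1 + X : ℚ⟦X⟧) * mk (fun n => (-1 : ℚ) ^ n) = 1 := by
  ext n
  rw [add_mul, one_mul, map_add]
  cases n with
  | zero => simp
  | succ n => rw [coeff_succ_X_mul]; simp [pow_succ]

/-- `(1 + X) d/dX` is the derivative `d/du` in the variable `u = log (1 + X)`. -/
noncomputable def derivWrtLog : Derivation ℚ ℚ⟦X⟧ ℚ⟦X⟧ := (1 + X : ℚ⟦X⟧) • d⁄dX ℚ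

theorem derivWrtLog_apply (F : ℚ⟦X⟧) : derivWrtLog F = (1 + X) * d⁄dX ℚ F := rfl

theorem coeff_derivWrtLog (F : ℚ⟦X⟧) (n : ℕ) :
    coeff n (derivWrtLog F) = (n + 1) * coeff (n + 1) F + n * coeff n F := by
  rw [derivWrtLog_apply, add_mul, one_mul, map_add, coeff_derivative]
  cases n with
  | zero => simp
  | succ n => rw [coeff_succ_X_mul, coeff_derivative]; push_cast; ring

theorem derivWrtLog_log : derivWrtLog (log ℚ) = 1 := by
  rw [derivWrtLog_apply, deriv_log]
  exact one_add_X_mul_mk_neg_one_pow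

theorem derivWrtLog_log_pow (m : ℕ) :
    derivWrtLog (log ℚ ^ (m + 1)) = (m + 1) * log ℚ ^ m := by
  rw [Derivation.leibniz_pow, derivWrtLog_log, smul_eq_mul, mul_one, nsmul_eq_mul]
  push_cast
  rfl

theorem derivWrtLog_subst_log (f : ℚ⟦X⟧) :
    derivWrtLog (f.subst (log ℚ)) = (d⁄dX ℚ f).subst (log ℚ) := by
  rw [derivWrtLog_apply, derivative_subst HasSubst.log, mul_left_comm, ← derivWrtLog_apply,
    derivWrtLog_log, mul_one]

theorem coeff_log_pow_mul_factorial (n m : ℕ) :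
    coeff n (log ℚ ^ m) * n ! = m ! * (descPochhammer ℚ n).coeff m := by
  induction n generalizing m with
  | zero =>
    cases m with
    | zero => simp
    | succ m =>
      simp [coeff_pow_eq_zero_of_lt constantCoeff_log m.succ_pos, Polynomial.coeff_one]
  | succ n ih =>
    cases m with
    | zero => simp [coeff_one, Polynomial.coeff_zero_eq_eval_zero]
    | succ m =>
      have h := congrArg (coeff n) (derivWrtLog_log_pow m)
      rw [coeff_derivWrtLog, ← map_natCast (C (R := ℚ)), ← map_one (C (R := ℚ)), ← map_add,
        coeff_C_mul] at h
      rw [descPochhammer_succ_right, ← Polynomial.C_eq_natCast, Polynomial.coeff_mul_X_sub_C,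
        Nat.factorial_succ, Nat.factorial_succ]
      have ih₁ := ih m
      have ih₂ := ih (m + 1)
      rw [Nat.factorial_succ] at ih₂
      push_cast at ih₂ ⊢
      linear_combination (n ! : ℚ) * h + (m + 1 : ℚ) * ih₁ - (n : ℚ) * ih₂

theorem log_pow_eq_C_factorial_mul_egf (m : ℕ) :
    log ℚ ^ m = C (m ! : ℚ) * egf fun n => (descPochhammer ℚ n).coeff m := by
  ext n
  rw [coeff_C_mul, coeff_egf, mul_div_assoc', ← coeff_log_pow_mul_factorial,
    mul_div_cancel_right₀ _ (Nat.cast_ne_zero.mpr n.factorial_ne_zero)]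

theorem sum_choose_mul_coeff_descPochhammer_mul (a : ℕ → ℚ) (n m : ℕ) :
    ∑ l ∈ range (n - m + 1), (n.choose l : ℚ) * (descPochhammer ℚ (n - l)).coeff m * a l =
      n ! / m ! * coeff n (egf a * log ℚ ^ m) := by
  rw [log_pow_eq_C_factorial_mul_egf, mul_left_comm, coeff_C_mul, div_mul_eq_mul_div,
    mul_div_assoc, mul_div_cancel_left₀ _ (Nat.cast_ne_zero.mpr m.factorial_ne_zero),
    factorial_mul_coeff_egf_mul_egf]
  rw [← sum_subset (range_subset_range.mpr (Nat.sub_le n m |>.trans_lt n.lt_succ_self))]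
  · exact sum_congr rfl fun l _ => by ring
  · intro l hln hl
    have hlt : (descPochhammer ℚ (n - l)).natDegree < m := by
      rw [descPochhammer_natDegree]; simp only [mem_range] at hln hl; omega
    rw [Polynomial.coeff_eq_zero_of_natDegree_lt hlt, mul_zero]

theorem coeff_descPochhammer_of_sum {R : Type*} [Ring R] {S1 : ℕ → ℕ → R}
    (hS1 : ∀ n, descPochhammer R n = ∑ l ∈ range (n + 1), Polynomial.C (S1 n l) * Polynomial.X ^ l)
    {n j : ℕ} (h : j ≤ n) : (descPochhammer R n).coeff j = S1 n j := by
  rw [hS1, Polynomial.finsetSum_coeff]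
  simp [Nat.lt_succ_of_le h]

theorem sum_choose_mul_stirling_mul {S1 : ℕ → ℕ → ℚ}
    (hS1 : ∀ n, descPochhammer ℚ n = ∑ l ∈ range (n + 1), Polynomial.C (S1 n l) * Polynomial.X ^ l)
    (a : ℕ → ℚ) {n m : ℕ} (h : m ≤ n) :
    ∑ l ∈ range (n - m + 1), (n.choose l : ℚ) * S1 (n - l) m * a l =
      n ! / m ! * coeff n (egf a * log ℚ ^ m) := by
  rw [← sum_choose_mul_coeff_descPochhammer_mul]
  refine sum_congr rfl fun l hl => ?_
  rw [coeff_descPochhammer_of_sum hS1 (by simp only [mem_range] at hl; omega)]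

/-- The polylogarithm factorial `Lif_κ`; `lifLog κ` is `Lif_κ (log (1 + X))`. -/
noncomputable def lif (κ : ℤ) : ℚ⟦X⟧ := mk fun m => ((m ! : ℚ) * (m + 1) ^ κ)⁻¹

noncomputable def lifLog (κ : ℤ) : ℚ⟦X⟧ := (lif κ).subst (log ℚ)

theorem coeff_lifLog (κ : ℤ) (n : ℕ) :
    coeff n (lifLog κ) =
      ∑ m ∈ range (n + 1), ((m ! : ℚ) * (m + 1) ^ κ)⁻¹ * coeff n (log ℚ ^ m) := by
  rw [lifLog, coeff_subst_eq_sum_range _ constantCoeff_log]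
  simp only [lif, coeff_mk]

theorem X_mul_derivative_lif (κ : ℤ) : X * d⁄dX ℚ (lif κ) = lif (κ - 1) - lif κ := by
  ext n
  cases n with
  | zero => simp [lif]
  | succ n =>
    have h : ((n : ℚ) + 1 + 1) ≠ 0 := by positivity
    simp only [coeff_succ_X_mul, coeff_derivative, map_sub, lif, coeff_mk]
    rw [zpow_sub_one₀ (by push_cast; exact h), Nat.factorial_succ]
    push_cast
    field_simp
    ring

theorem log_mul_derivWrtLog_lifLog (κ : ℤ) :
    log ℚ * derivWrtLog (lifLog κ) = lifLog (κ - 1) - lifLog κ := by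
  rw [lifLog, derivWrtLog_subst_log]
  nth_rw 1 [← subst_X (R := ℚ) HasSubst.log]
  rw [← subst_mul HasSubst.log, X_mul_derivative_lif, subst_sub HasSubst.log]
  rfl

noncomputable def logSubXDivXSq : ℚ⟦X⟧ := mk fun j => (-1 : ℚ) ^ (j + 1) / (j + 2)

theorem X_sq_mul_logSubXDivXSq : X ^ 2 * logSubXDivXSq = log ℚ - X := by
  ext n
  rcases n with _ | _ | n
  · simp
  · simp [pow_two, mul_assoc, coeff_succ_X_mul]
  · rw [pow_two, mul_assoc, coeff_succ_X_mul, coeff_succ_X_mul, logSubXDivXSq, coeff_mk,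
      map_sub, coeff_log, coeff_X, if_neg (by omega), if_neg (by omega)]
    push_cast
    ring

theorem sum_neg_one_pow_mul_choose_mul (b : ℕ → ℚ) (c d : ℚ) (l : ℕ) :
    ∑ a ∈ range (l + 1),
        (-1 : ℚ) ^ (l - a + 1) * ((l - a)! / ((l - a : ℕ) + 2)) * c * l.choose a * d * b a =
      c * d * (l ! * coeff l (egf b * logSubXDivXSq)) := by
  rw [← egf_factorial_mul_coeff logSubXDivXSq, factorial_mul_coeff_egf_mul_egf, mul_sum]
  refine sum_congr rfl fun a _ => ?_
  rw [logSubXDivXSq, coeff_mk]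
  ring

section LogDivX

variable {u : ℚ⟦X⟧ˣ} (hu : (u : ℚ⟦X⟧) * X = log ℚ)
include hu

theorem derivWrtLog_of_mul_X_eq_log : derivWrtLog u = -(logSubXDivXSq + u) := by
  have hθ : X * derivWrtLog u = 1 - (1 + X) * (u : ℚ⟦X⟧) := by
    have h := congrArg derivWrtLog hu
    rw [Derivation.leibniz, derivWrtLog_log, smul_eq_mul, smul_eq_mul, derivWrtLog_apply X,
      derivative_X] at h
    linear_combination h
  have hH : X * logSubXDivXSq = (u : ℚ⟦X⟧) - 1 :=
    mul_left_cancel₀ X_ne_zero (by linear_combination X_sq_mul_logSubXDivXSq - hu)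
  exact mul_left_cancel₀ X_ne_zero (by linear_combination hθ + hH)

theorem derivWrtLog_inv_pow (r : ℕ) :
    derivWrtLog (↑u⁻¹ ^ r) = r * (logSubXDivXSq * ↑u⁻¹ ^ (r + 1)) + r * ↑u⁻¹ ^ r := by
  have hinv : (↑u⁻¹ * u : ℚ⟦X⟧) = 1 := u.inv_mul
  have hθ : derivWrtLog ↑u⁻¹ = logSubXDivXSq * ↑u⁻¹ ^ 2 + ↑u⁻¹ := by
    rw [derivWrtLog.leibniz_of_mul_eq_one hinv, derivWrtLog_of_mul_X_eq_log hu, smul_eq_mul]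
    linear_combination (↑u⁻¹ : ℚ⟦X⟧) * hinv
  cases r with
  | zero => simp
  | succ r =>
    rw [Derivation.leibniz_pow, hθ, Nat.add_sub_cancel, smul_eq_mul, nsmul_eq_mul]
    ring

theorem derivWrtLog_inv_pow_mul_lifLog_mul_log_pow (r m : ℕ) (κ : ℤ) :
    derivWrtLog (↑u⁻¹ ^ r * lifLog κ * log ℚ ^ (m + 1)) =
      r * (logSubXDivXSq * ↑u⁻¹ ^ (r + 1) * lifLog κ * log ℚ ^ (m + 1))
      + r * (↑u⁻¹ ^ r * lifLog κ * log ℚ ^ (m + 1))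
      + ↑u⁻¹ ^ r * lifLog (κ - 1) * log ℚ ^ m
      + m * (↑u⁻¹ ^ r * lifLog κ * log ℚ ^ m) := by
  simp only [Derivation.leibniz, smul_eq_mul, derivWrtLog_log_pow, derivWrtLog_inv_pow hu]
  linear_combination (↑u⁻¹ ^ r * log ℚ ^ m : ℚ⟦X⟧) * log_mul_derivWrtLog_lifLog κ

end LogDivX

theorem map_evalRingHom_map_C {R : Type*} [CommRing R] (x : R) (F : R⟦X⟧) :
    map (Polynomial.evalRingHom x) (map Polynomial.C F) = F := by
  ext n; simp [coeff_map]

theorem map_evalRingHom_mk_smul {R : Type*} [CommRing R] (x : R) (c : ℕ → R)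
    (p : ℕ → Polynomial R) :
    map (Polynomial.evalRingHom x) (mk fun n => c n • p n) = mk fun n => c n * (p n).eval x := by
  ext n; simp [coeff_map, Polynomial.smul_eq_C_mul]

section Appell

/- The series `∑ (-1)^n x^{(n)} X^n / n!`, with `x^{(n)}` the rising factorial, is `(1 + X)^{-x}`;
it is `1` at `x = 0` and `(1 + X)⁻¹` at `x = 1`. -/
variable {F : ℚ⟦X⟧} {p : ℕ → Polynomial ℚ}
  (h : map Polynomial.C F * mk (fun n => ((-1 : ℚ) ^ n / n !) • ascPochhammer ℚ n) =
    mk fun n => ((n ! : ℚ)⁻¹) • p n)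
include h

theorem egf_eval_eq_mul_mk (x : ℚ) :
    egf (fun n => (p n).eval x) =
      F * mk fun n => (-1 : ℚ) ^ n / n ! * (ascPochhammer ℚ n).eval x := by
  have hx := congrArg (map (Polynomial.evalRingHom x)) h
  rw [map_mul, map_evalRingHom_map_C, map_evalRingHom_mk_smul, map_evalRingHom_mk_smul] at hx
  rw [hx]
  ext n
  rw [coeff_egf, coeff_mk, inv_mul_eq_div]

theorem egf_eval_zero : egf (fun n => (p n).eval 0) = F := by
  have h₀ : (mk fun n => (-1 : ℚ) ^ n / n ! * (ascPochhammer ℚ n).eval 0) = 1 := by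
    ext n
    cases n <;> simp
  rw [egf_eval_eq_mul_mk h, h₀, mul_one]

theorem one_add_X_mul_egf_eval_one : (1 + X) * egf (fun n => (p n).eval 1) = F := by
  have h₁ : (mk fun n => (-1 : ℚ) ^ n / n ! * (ascPochhammer ℚ n).eval 1) =
      mk fun n => (-1 : ℚ) ^ n := by
    ext n
    rw [coeff_mk, coeff_mk, ascPochhammer_eval_one,
      div_mul_cancel₀ _ (Nat.cast_ne_zero.mpr n.factorial_ne_zero)]
  rw [egf_eval_eq_mul_mk h, h₁, mul_left_comm, one_add_X_mul_mk_neg_one_pow, mul_one]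

end Appell

theorem succ_mul_coeff_succ_egf_mul_log_pow {u : ℚ⟦X⟧ˣ} (hu : (u : ℚ⟦X⟧) * X = log ℚ)
    {A : ℤ → ℤ → ℕ → Polynomial ℚ}
    (hA : ∀ ρ κ : ℤ, map Polynomial.C (((u ^ (-ρ) : ℚ⟦X⟧ˣ) : ℚ⟦X⟧) * lifLog κ) *
        mk (fun n => ((-1 : ℚ) ^ n / n !) • ascPochhammer ℚ n) =
      mk (fun n => ((n ! : ℚ)⁻¹) • A ρ κ n))
    (r m N : ℕ) (k : ℤ) :
    (N + 1) * coeff (N + 1) (egf (fun l => (A r k l).eval 0) * log ℚ ^ (m + 1)) =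
      r * coeff N (egf (fun l => (A (r + 1) k l).eval 1) * logSubXDivXSq * log ℚ ^ (m + 1))
      + r * coeff N (egf (fun l => (A r k l).eval 1) * log ℚ ^ (m + 1))
      + coeff N (egf (fun l => (A r (k - 1) l).eval 1) * log ℚ ^ m)
      + m * coeff N (egf (fun l => (A r k l).eval 1) * log ℚ ^ m) := by
  have hpow (ρ : ℕ) : ((u ^ (-(ρ : ℤ)) : ℚ⟦X⟧ˣ) : ℚ⟦X⟧) = ↑u⁻¹ ^ ρ := by simp
  have h₀ := egf_eval_zero (hA r k)
  have h₁ := one_add_X_mul_egf_eval_one (hA r k)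
  have h₂ := one_add_X_mul_egf_eval_one (hA (r + 1) k)
  have h₃ := one_add_X_mul_egf_eval_one (hA r (k - 1))
  rw [hpow] at h₀ h₁ h₃
  rw [show -((r : ℤ) + 1) = -((r + 1 : ℕ) : ℤ) by push_cast; rfl, hpow] at h₂
  set L := log ℚ
  set P₀ := egf fun l => (A r k l).eval 0
  set P₁ := egf fun l => (A r k l).eval 1
  set P₂ := egf fun l => (A (r + 1) k l).eval 1
  set P₃ := egf fun l => (A r (k - 1) l).eval 1
  have hderiv : d⁄dX ℚ (P₀ * L ^ (m + 1)) =
      r * (P₂ * logSubXDivXSq * L ^ (m + 1)) + r * (P₁ * L ^ (m + 1)) + P₃ * L ^ m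
        + m * (P₁ * L ^ m) := by
    refine mul_left_cancel₀ (left_ne_zero_of_mul_eq_one one_add_X_mul_mk_neg_one_pow) ?_
    rw [← derivWrtLog_apply, h₀, derivWrtLog_inv_pow_mul_lifLog_mul_log_pow hu]
    linear_combination (-(r * logSubXDivXSq * L ^ (m + 1))) * h₂
      - (r * L ^ (m + 1) + m * L ^ m) * h₁ - L ^ m * h₃
  have hcoeff (c : ℕ) (F : ℚ⟦X⟧) : coeff N ((c : ℚ⟦X⟧) * F) = c * coeff N F := by
    rw [← map_natCast C, coeff_C_mul]
  have h := congrArg (coeff N) hderiv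
  rw [coeff_derivative, map_add, map_add, map_add, hcoeff, hcoeff, hcoeff] at h
  linear_combination h

end MixedTypePoly

open MixedTypePoly

theorem cauchy_stmt17_general
    (r k : ℤ) (hr : 0 ≤ r) (n m : ℕ) (hm : 1 ≤ m) (hmn : m + 1 ≤ n)
    (L : PowerSeries ℚ)
    (hL : ∀ n : ℕ, PowerSeries.coeff n L = if n = 0 then 0 else (-1 : ℚ) ^ (n - 1) / n)
    (Lu : (PowerSeries ℚ)ˣ)
    (hLu : (Lu : PowerSeries ℚ) * PowerSeries.X = L)
    (G : ℤ → PowerSeries ℚ)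
    (hG : ∀ (j : ℤ) (n : ℕ), PowerSeries.coeff n (G j) =
      ∑ m ∈ Finset.range (n + 1),
        ((m.factorial : ℚ) * ((m : ℚ) + 1) ^ j)⁻¹ * PowerSeries.coeff n (L ^ m))
    (A : ℤ → ℤ → ℕ → Polynomial ℚ)
    (hA : ∀ ρ κ : ℤ, PowerSeries.map (Polynomial.C : ℚ →+* Polynomial ℚ)
        (((Lu ^ (-ρ) : (PowerSeries ℚ)ˣ) : PowerSeries ℚ) * G κ) *
        PowerSeries.mk (fun n => ((-1 : ℚ) ^ n / n.factorial) • ascPochhammer ℚ n) =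
      PowerSeries.mk (fun n => ((n.factorial : ℚ)⁻¹) • A ρ κ n))
    (S1 : ℕ → ℕ → ℚ)
    (hS1 : ∀ n : ℕ, descPochhammer ℚ n =
      ∑ l ∈ Finset.range (n + 1), Polynomial.C (S1 n l) * Polynomial.X ^ l)
    :
    ∑ l ∈ Finset.range (n - m + 1), (n.choose l : ℚ) * S1 (n - l) m * (A r k l).eval 0 =
      (r : ℚ) * ∑ l ∈ Finset.range (n - 1 - m + 1), ∑ a ∈ Finset.range (l + 1),
        (-1 : ℚ) ^ (l - a + 1) * (((l - a).factorial : ℚ) / (((l - a : ℕ) : ℚ) + 2)) *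
          ((n - 1).choose l : ℚ) * (l.choose a : ℚ) * S1 (n - 1 - l) m *
          (A (r + 1) k a).eval 1
      + (r : ℚ) * ∑ l ∈ Finset.range (n - 1 - m + 1),
          ((n - 1).choose l : ℚ) * S1 (n - l - 1) m * (A r k l).eval 1
      + (1 / (m : ℚ)) * ∑ l ∈ Finset.range (n - m + 1),
          ((n - 1).choose l : ℚ) * S1 (n - l - 1) (m - 1) * (A r (k - 1) l).eval 1
      + (1 - 1 / (m : ℚ)) * ∑ l ∈ Finset.range (n - m + 1),
          ((n - 1).choose l : ℚ) * S1 (n - l - 1) (m - 1) * (A r k l).eval 1 := by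
  obtain rfl : L = log ℚ := ext fun j => by rw [hL, coeff_log_eq]
  obtain rfl : G = lifLog := funext fun κ => ext fun j => by rw [hG, coeff_lifLog]
  lift r to ℕ using hr
  obtain ⟨m, rfl⟩ : ∃ m', m = m' + 1 := ⟨m - 1, by omega⟩
  obtain ⟨N, rfl⟩ : ∃ N, n = N + 1 := ⟨n - 1, by omega⟩
  rw [sum_choose_mul_stirling_mul hS1 _ (by omega)]
  simp only [Nat.add_sub_cancel, Nat.sub_sub, Nat.add_sub_add_right,
    sum_neg_one_pow_mul_choose_mul]
  rw [sum_choose_mul_stirling_mul hS1 _ (by omega), sum_choose_mul_stirling_mul hS1 _ (by omega),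
    sum_choose_mul_stirling_mul hS1 _ (by omega), sum_choose_mul_stirling_mul hS1 _ (by omega),
    egf_factorial_mul_coeff, Nat.factorial_succ N, Nat.factorial_succ m]
  have h := succ_mul_coeff_succ_egf_mul_log_pow hLu hA r m N k
  push_cast
  field_simp
  linear_combination h

/-- for integers `n - 1 ≥ m ≥ 1`, `r ≥ 0` and `k ∈ ℤ`, the identity of
Theorem 5 of the paper, relating `Σ_l C(n,l) S₁(n-l,m) A_l^{(r,k)}` to values of the
mixed type polynomials at `1`. -/
theorem cauchy_stmt17
    (r k : ℤ) (hr : 0 ≤ r) (n m : ℕ) (hm : 1 ≤ m) (hmn : m + 1 ≤ n)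
    (L : PowerSeries ℚ)
    (hL : ∀ n : ℕ, PowerSeries.coeff n L = if n = 0 then 0 else (-1 : ℚ) ^ (n - 1) / n)
    (Lu : (PowerSeries ℚ)ˣ)
    (hLu : (Lu : PowerSeries ℚ) * PowerSeries.X = L)
    (G : ℤ → PowerSeries ℚ)
    (hG : ∀ (j : ℤ) (n : ℕ), PowerSeries.coeff n (G j) =
      ∑ m ∈ Finset.range (n + 1),
        ((m.factorial : ℚ) * ((m : ℚ) + 1) ^ j)⁻¹ * PowerSeries.coeff n (L ^ m))
    (A : ℤ → ℤ → ℕ → Polynomial ℚ)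
    (hA : ∀ ρ κ : ℤ, PowerSeries.map (Polynomial.C : ℚ →+* Polynomial ℚ)
        (((Lu ^ (-ρ) : (PowerSeries ℚ)ˣ) : PowerSeries ℚ) * G κ) *
        PowerSeries.mk (fun n => ((-1 : ℚ) ^ n / n.factorial) • ascPochhammer ℚ n) =
      PowerSeries.mk (fun n => ((n.factorial : ℚ)⁻¹) • A ρ κ n))
    (S1 : ℕ → ℕ → ℚ)
    (hS1 : ∀ n : ℕ, descPochhammer ℚ n =
      ∑ l ∈ Finset.range (n + 1), Polynomial.C (S1 n l) * Polynomial.X ^ l)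
    (hS1zero : ∀ n l : ℕ, n < l → S1 n l = 0)
    :
    ∑ l ∈ Finset.range (n - m + 1), (n.choose l : ℚ) * S1 (n - l) m * (A r k l).eval 0 =
      (r : ℚ) * ∑ l ∈ Finset.range (n - 1 - m + 1), ∑ a ∈ Finset.range (l + 1),
        (-1 : ℚ) ^ (l - a + 1) * (((l - a).factorial : ℚ) / (((l - a : ℕ) : ℚ) + 2)) *
          ((n - 1).choose l : ℚ) * (l.choose a : ℚ) * S1 (n - 1 - l) m *
          (A (r + 1) k a).eval 1
      + (r : ℚ) * ∑ l ∈ Finset.range (n - 1 - m + 1),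
          ((n - 1).choose l : ℚ) * S1 (n - l - 1) m * (A r k l).eval 1
      + (1 / (m : ℚ)) * ∑ l ∈ Finset.range (n - m + 1),
          ((n - 1).choose l : ℚ) * S1 (n - l - 1) (m - 1) * (A r (k - 1) l).eval 1
      + (1 - 1 / (m : ℚ)) * ∑ l ∈ Finset.range (n - m + 1),
          ((n - 1).choose l : ℚ) * S1 (n - l - 1) (m - 1) * (A r k l).eval 1 :=
  cauchy_stmt17_general r k hr n m hm hmn L hL Lu hLu G hG A hA S1 hS1
end
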